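/- arXiv:1408.3825 — 5 statements merged into one kernel-verified Lean document; each statement's English description precedes it below -/
import Mathlib

section
/- Let f : ℝ² → ℝ² be given by f(x,y) = (x, y³ + x·y). Then the vector field η(X,Y) = (9Y², -2X²Y) is liftable over f, with lift ξ(x,y) = (9(y³+xy)², -y(y²+x)(2x+3y²)): for all (x,y), Df(x,y)·ξ(x,y) = η(f(x,y)). -/
theorem hasFDerivAt_cusp {𝕜 : Type*} [NontriviallyNormedField 𝕜] (p : 𝕜 × 𝕜) :
    HasFDerivAt (fun q : 𝕜 × 𝕜 => (q.1, q.2 ^ 3 + q.1 * q.2))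
      ((ContinuousLinearMap.fst 𝕜 𝕜 𝕜).prod
        ((3 * p.2 ^ 2 + p.1) • ContinuousLinearMap.snd 𝕜 𝕜 𝕜 +
          p.2 • ContinuousLinearMap.fst 𝕜 𝕜 𝕜)) p := by
  have hx : HasFDerivAt (fun q : 𝕜 × 𝕜 => q.1) (ContinuousLinearMap.fst 𝕜 𝕜 𝕜) p := hasFDerivAt_fst
  have hy : HasFDerivAt (fun q : 𝕜 × 𝕜 => q.2) (ContinuousLinearMap.snd 𝕜 𝕜 𝕜) p := hasFDerivAt_snd
  refine hx.prodMk ?_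
  convert (hy.pow 3).fun_add (hx.fun_mul hy) using 1
  ext <;> simp

theorem fderiv_cusp_apply {𝕜 : Type*} [NontriviallyNormedField 𝕜] (p v : 𝕜 × 𝕜) :
    fderiv 𝕜 (fun q : 𝕜 × 𝕜 => (q.1, q.2 ^ 3 + q.1 * q.2)) p v
      = (v.1, (3 * p.2 ^ 2 + p.1) * v.2 + p.2 * v.1) := by
  simp [(hasFDerivAt_cusp p).fderiv]

/-- η(X,Y) = (9Y², -2X²Y) is liftable over f(x,y) = (x, y³ + xy) with lift
ξ(x,y) = (9(y³+xy)², -y(y²+x)(2x+3y²)): Df·ξ = η∘f pointwise. -/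
theorem stmt4 :
    ∀ p : ℝ × ℝ,
      fderiv ℝ (fun q : ℝ × ℝ => (q.1, q.2 ^ 3 + q.1 * q.2)) p
          (9 * (p.2 ^ 3 + p.1 * p.2) ^ 2,
            -(p.2 * (p.2 ^ 2 + p.1) * (2 * p.1 + 3 * p.2 ^ 2)))
        = (9 * (p.2 ^ 3 + p.1 * p.2) ^ 2,
            -(2 * p.1 ^ 2 * (p.2 ^ 3 + p.1 * p.2))) := by
  intro p
  rw [fderiv_cusp_apply, Prod.mk.injEq]
  exact ⟨rfl, by ring⟩
end

section
/- Let ψ : ℝ^n → ℝ^{2n-1} be the map ψ(v₁,…,v_{n-1}, y) = (v₁,…,v_{n-1}, y², v₁y, …, v_{n-1}y), and fix indices i, j with 1 ≤ i, j ≤ n-1. Then the vector field η on ℝ^{2n-1} with η_{V_j} = V_i, η_{X_j} = X_i, and all other components zero, is liftable over ψ, with lift ξ having source components ξ_{v_j} = v_i and all others zero. -/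
section

variable {𝕜 : Type*} [NontriviallyNormedField 𝕜] {ι : Type*} [Fintype ι]

def foldMap (q : (ι → 𝕜) × 𝕜) : (ι → 𝕜) × 𝕜 × (ι → 𝕜) :=
  (q.1, q.2 ^ 2, fun m => q.1 m * q.2)

theorem fderiv_foldMap_apply (p : (ι → 𝕜) × 𝕜) (u : ι → 𝕜) (t : 𝕜) :
    fderiv 𝕜 foldMap p (u, t) = (u, 2 * p.2 * t, fun m => u m * p.2 + p.1 m * t) := by
  have hfst : HasFDerivAt (fun q : (ι → 𝕜) × 𝕜 => q.1) (ContinuousLinearMap.fst 𝕜 _ _) p :=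
    hasFDerivAt_fst
  have hsq := (hasFDerivAt_snd (𝕜 := 𝕜) (p := p)).pow 2
  have hprod : HasFDerivAt (fun q : (ι → 𝕜) × 𝕜 => fun m => q.1 m * q.2)
      (ContinuousLinearMap.pi fun m =>
        p.1 m • ContinuousLinearMap.snd 𝕜 _ _ +
          p.2 • (ContinuousLinearMap.proj m).comp (ContinuousLinearMap.fst 𝕜 _ _)) p :=
    hasFDerivAt_pi.2 fun m => (hasFDerivAt_pi'.1 hfst m).mul hasFDerivAt_snd
  unfold foldMap
  rw [(hfst.prodMk (hsq.prodMk hprod)).fderiv]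
  ext m <;> simp [mul_comm, add_comm]

end

theorem stmt8_general (n : ℕ) (i j : Fin (n - 1)) :
    ∀ p : (Fin (n - 1) → ℝ) × ℝ,
      fderiv ℝ
          (fun q : (Fin (n - 1) → ℝ) × ℝ =>
            ((q.1, q.2 ^ 2, fun m => q.1 m * q.2) :
              (Fin (n - 1) → ℝ) × ℝ × (Fin (n - 1) → ℝ)))
          p (Pi.single j (p.1 i), (0 : ℝ))
        = (Pi.single j (p.1 i), (0 : ℝ), Pi.single j (p.1 i * p.2)) := by
  intro p
  refine (fderiv_foldMap_apply p _ 0).trans ?_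
  ext m <;> simp [Pi.single_apply]

/-- For ψ(v,y) = (v, y², v₁y,…,v_{n-1}y) and fixed indices i, j, the vector
field η with η_{V_j} = V_i, η_{X_j} = X_i (all other components zero) is
liftable over ψ with lift ξ whose only nonzero component is ξ_{v_j} = v_i. -/
theorem stmt8 (n : ℕ) (hn : 1 ≤ n) (i j : Fin (n - 1)) :
    ∀ p : (Fin (n - 1) → ℝ) × ℝ,
      fderiv ℝ
          (fun q : (Fin (n - 1) → ℝ) × ℝ =>
            ((q.1, q.2 ^ 2, fun m => q.1 m * q.2) :
              (Fin (n - 1) → ℝ) × ℝ × (Fin (n - 1) → ℝ)))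
          p (Pi.single j (p.1 i), (0 : ℝ))
        = (Pi.single j (p.1 i), (0 : ℝ), Pi.single j (p.1 i * p.2)) :=
  stmt8_general n i j
end

section
/- Let φ : ℝⁿ → ℝⁿ be the Morin map φ(x₁,…,x_{n-1}, y) = (x₁,…,x_{n-1}, y^{n+1} + Σ_{i=1}^{n-1} x_i y^i). Then the Euler-type vector field η with components η_i(X) = (n+1-i)·X_i for 1 ≤ i ≤ n-1 and η_n(X) = (n+1)·X_n is liftable over φ, with lift ξ(x,y) = ((n+1-1)x₁, …, (n+1-(n-1))x_{n-1}, y). -/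
/-!
The Morin map is quasi-homogeneous: with the weights `n + 1 - i` on `x_i`, `1` on `y` and `n + 1`
on the last target coordinate, `φ (t ^ w • p) = t ^ w' • φ p` for all `t`. The lift `ξ` and the
field `η` are the generators of these two scalings, so differentiating the identity at `t = 1`
gives `Dφ(p) ξ(p) = η(φ(p))`.
-/

open Finset

section Euler

variable {𝕜 E F : Type*} [NontriviallyNormedField 𝕜] [NormedAddCommGroup E] [NormedSpace 𝕜 E]
  [NormedAddCommGroup F] [NormedSpace 𝕜 F]

theorem fderiv_apply_eq_of_comp_eq {f : E → F} {γ : 𝕜 → E} {δ : 𝕜 → F} {t : 𝕜} {v : E} {w : F}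
    (hf : DifferentiableAt 𝕜 f (γ t)) (hγ : HasDerivAt γ v t) (hδ : HasDerivAt δ w t)
    (h : f ∘ γ = δ) : fderiv 𝕜 f (γ t) v = w :=
  (hf.hasFDerivAt.comp_hasDerivAt t hγ).unique (h ▸ hδ)

theorem hasDerivAt_pow_mul_at_one (k : ℕ) (c : 𝕜) :
    HasDerivAt (fun t : 𝕜 => t ^ k * c) (k * c) 1 := by
  simpa using (hasDerivAt_pow k (1 : 𝕜)).mul_const c

theorem hasDerivAt_pi_pow_mul_at_one {ι : Type*} [Fintype ι] (w : ι → ℕ) (x : ι → 𝕜) :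
    HasDerivAt (fun t : 𝕜 => fun i => t ^ w i * x i) (fun i => (w i : 𝕜) * x i) 1 :=
  hasDerivAt_pi.2 fun i => hasDerivAt_pow_mul_at_one (w i) (x i)

end Euler

def morinMap (n : ℕ) (q : (Fin (n - 1) → ℝ) × ℝ) : (Fin (n - 1) → ℝ) × ℝ :=
  (q.1, q.2 ^ (n + 1) + ∑ i : Fin (n - 1), q.1 i * q.2 ^ (i.val + 1))

theorem differentiable_morinMap (n : ℕ) : Differentiable ℝ (morinMap n) := by
  unfold morinMap; fun_prop

theorem morinMap_weighted_scaling (n : ℕ) (t : ℝ) (x : Fin (n - 1) → ℝ) (y : ℝ) :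
    morinMap n (fun i => t ^ (n + 1 - (i.val + 1)) * x i, t * y) =
      (fun i => t ^ (n + 1 - (i.val + 1)) * (morinMap n (x, y)).1 i,
        t ^ (n + 1) * (morinMap n (x, y)).2) := by
  refine Prod.ext rfl ?_
  simp only [morinMap, mul_add, mul_sum]
  congr 1
  · ring
  · refine sum_congr rfl fun i _ => ?_
    have hw : n + 1 = (n + 1 - (i.val + 1)) + (i.val + 1) := by omega
    conv_rhs => rw [hw]
    ring

theorem stmt10_general (n : ℕ) :
    ∀ p : (Fin (n - 1) → ℝ) × ℝ,
      fderiv ℝ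
          (fun q : (Fin (n - 1) → ℝ) × ℝ =>
            ((q.1, q.2 ^ (n + 1) + ∑ i : Fin (n - 1), q.1 i * q.2 ^ (i.val + 1)) :
              (Fin (n - 1) → ℝ) × ℝ))
          p
          ((fun i => ((n + 1 - (i.val + 1) : ℕ) : ℝ) * p.1 i), p.2)
        = ((fun i => ((n + 1 - (i.val + 1) : ℕ) : ℝ) * p.1 i),
            ((n + 1 : ℕ) : ℝ) *
              (p.2 ^ (n + 1) + ∑ i : Fin (n - 1), p.1 i * p.2 ^ (i.val + 1))) := by
  rintro ⟨x, y⟩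
  set w : Fin (n - 1) → ℕ := fun i => n + 1 - (i.val + 1)
  have hγ := (hasDerivAt_pi_pow_mul_at_one w x).prodMk (hasDerivAt_mul_const y)
  have hδ := (hasDerivAt_pi_pow_mul_at_one w (morinMap n (x, y)).1).prodMk
    (hasDerivAt_pow_mul_at_one (n + 1) (morinMap n (x, y)).2)
  have key := fderiv_apply_eq_of_comp_eq (differentiable_morinMap n _) hγ hδ
    (funext fun t => morinMap_weighted_scaling n t x y)
  simp only [one_pow, one_mul] at key
  exact key

/-- For the Morin map φ(x,y) = (x, y^{n+1} + Σ x_i y^i), the Euler-type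
vector field η with η_i(X) = (n+1-i)·X_i (1 ≤ i ≤ n-1) and
η_n(X) = (n+1)·X_n is liftable over φ, with lift
ξ(x,y) = ((n+1-1)x₁,…,(n+1-(n-1))x_{n-1}, y). -/
theorem stmt10 (n : ℕ) (hn : 1 ≤ n) :
    ∀ p : (Fin (n - 1) → ℝ) × ℝ,
      fderiv ℝ
          (fun q : (Fin (n - 1) → ℝ) × ℝ =>
            ((q.1, q.2 ^ (n + 1) + ∑ i : Fin (n - 1), q.1 i * q.2 ^ (i.val + 1)) :
              (Fin (n - 1) → ℝ) × ℝ))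
          p
          ((fun i => ((n + 1 - (i.val + 1) : ℕ) : ℝ) * p.1 i), p.2)
        = ((fun i => ((n + 1 - (i.val + 1) : ℕ) : ℝ) * p.1 i),
            ((n + 1 : ℕ) : ℝ) *
              (p.2 ^ (n + 1) + ∑ i : Fin (n - 1), p.1 i * p.2 ^ (i.val + 1))) :=
  stmt10_general n
end

section
/- Let n, p, i be natural numbers with 1 ≤ n ≤ p and i ≥ 1, and let δ, γ be nonnegative integers. Suppose p·C(p+i−1, i) = (p−n)·C(n+i−1, i)·δ + ((n−1)/(n+i−1))·C(n+i−1, i)·γ (as an identity of rationals), and suppose that p > n or (n−1)·γ > 0. Then p·C(p+i, i+1) > (p−n)·C(n+i, i+1)·δ + (C(n+i, i+1) − C(n+i−1, i))·γ. -/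
/-!
Put `c = C(n+i-1, i) δ` and `y = (n-1)/(n+i-1) · C(n+i-1, i) γ`, so the hypothesis reads
`p C(p+i-1, i) = (p - n) c + y`, which is positive. Using `C(m, i+1) (i+1) = m C(m-1, i)`, the target
multiplied by `i + 1` becomes `(p + i)((p - n) c + y) > (n + i)(p - n) c + (n + i - 1) y`, that is
`0 < (p - n)² c + (p - n + 1) y`; this follows from the positivity of `(p - n) c + y` since `k ≤ k²`
for a natural number `k`.
-/

theorem Nat.cast_choose_succ_mul {R : Type*} [CommSemiring R] {m : ℕ} (hm : m ≠ 0) (i : ℕ) :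
    (m.choose (i + 1) : R) * (i + 1) = m * (m - 1).choose i := by
  obtain ⟨k, rfl⟩ := Nat.exists_eq_add_one_of_ne_zero hm
  rw [Nat.add_sub_cancel]
  exact_mod_cast congrArg (Nat.cast (R := R)) (Nat.add_one_mul_choose_eq k i).symm

theorem sq_mul_add_succ_mul_pos {K : Type*} [Field K] [LinearOrder K] [IsStrictOrderedRing K]
    (k : ℕ) {x y : K} (hx : 0 ≤ x) (hy : 0 ≤ y) (h : 0 < k * x + y) :
    0 < (k : K) ^ 2 * x + (k + 1) * y := by
  have hk : (k : K) ≤ (k : K) ^ 2 := by exact_mod_cast Nat.le_self_pow two_ne_zero k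
  nlinarith

theorem stmt15_general (n p i : ℕ) (hn : 1 ≤ n) (hnp : n ≤ p)
    (δ γ : ℕ)
    (h : (p : ℚ) * (Nat.choose (p + i - 1) i)
          = ((p : ℚ) - n) * (Nat.choose (n + i - 1) i) * δ
            + (((n : ℚ) - 1) / ((n : ℚ) + i - 1)) * (Nat.choose (n + i - 1) i) * γ) :
    (p : ℚ) * (Nat.choose (p + i) (i + 1))
      > ((p : ℚ) - n) * (Nat.choose (n + i) (i + 1)) * δ
        + ((Nat.choose (n + i) (i + 1) : ℚ) - (Nat.choose (n + i - 1) i)) * γ := by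
  have hA := Nat.cast_choose_succ_mul (R := ℚ) (m := p + i) (by omega) i
  have hB := Nat.cast_choose_succ_mul (R := ℚ) (m := n + i) (by omega) i
  push_cast at hA hB
  have hn' : (1 : ℚ) ≤ n := by exact_mod_cast hn
  have hi' : (0 : ℚ) ≤ i := i.cast_nonneg
  set q : ℚ := ((n : ℚ) - 1) / (n + i - 1)
  -- `n + i - 1 = 0` forces `n = 1`, so there the junk value `0 / 0 = 0` is harmless.
  have hq : ((n : ℚ) + i - 1) * q = n - 1 := mul_div_cancel_of_imp' fun _ ↦ by linarith
  have hq_nonneg : 0 ≤ q := div_nonneg (by linarith) (by linarith)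
  have hpA : 0 < (p : ℚ) * (p + i - 1).choose i := by
    have := Nat.choose_pos (show i ≤ p + i - 1 by omega)
    have := hn.trans hnp
    positivity
  have key := sq_mul_add_succ_mul_pos (K := ℚ) (p - n) (x := (n + i - 1).choose i * δ)
    (y := q * (n + i - 1).choose i * γ) (by positivity) (by positivity)
    (by rw [Nat.cast_sub hnp, ← mul_assoc, ← h]; exact hpA)
  rw [Nat.cast_sub hnp] at key
  refine lt_of_mul_lt_mul_left (a := (i : ℚ) + 1) ?_ (by positivity)
  linear_combination key - (p : ℚ) * hA + (((p : ℚ) - n) * δ + γ) * hB - ((p : ℚ) + i) * h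
    - (n + i - 1).choose i * γ * hq

/-- Key combinatorial inequality in the proof of Proposition 3 (case i ≥ 1). -/
theorem stmt15 (n p i : ℕ) (hn : 1 ≤ n) (hnp : n ≤ p) (hi : 1 ≤ i)
    (δ γ : ℕ)
    (h : (p : ℚ) * (Nat.choose (p + i - 1) i)
          = ((p : ℚ) - n) * (Nat.choose (n + i - 1) i) * δ
            + (((n : ℚ) - 1) / ((n : ℚ) + i - 1)) * (Nat.choose (n + i - 1) i) * γ)
    (hpos : p > n ∨ (n - 1) * γ > 0) :
    (p : ℚ) * (Nat.choose (p + i) (i + 1))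
      > ((p : ℚ) - n) * (Nat.choose (n + i) (i + 1)) * δ
        + ((Nat.choose (n + i) (i + 1) : ℚ) - (Nat.choose (n + i - 1) i)) * γ :=
  stmt15_general n p i hn hnp δ γ h
end

section
/- Let f, g : ℝⁿ → ℝᵖ, let h : ℝⁿ → ℝⁿ and H : ℝᵖ → ℝᵖ be smooth diffeomorphisms with g = H ∘ f ∘ h. If η : ℝᵖ → ℝᵖ is a vector field liftable over f via ξ (i.e. η ∘ f = Df · ξ pointwise), then the vector field DH ∘ η ∘ H⁻¹ (i.e. x ↦ DH(H⁻¹(x)) · η(H⁻¹(x))) is liftable over g, with lift Dh⁻¹ ∘ ξ ∘ h (i.e. x ↦ Dh⁻¹(h(x)) · ξ(h(x))). -/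
/-- Lemma 6.2: if g = H ∘ f ∘ h with h, H diffeomorphisms and η is liftable
over f via ξ, then DH ∘ η ∘ H⁻¹ is liftable over g with lift
Dh⁻¹ ∘ ξ ∘ h. -/
theorem stmt18 (n p : ℕ)
    (f g : (Fin n → ℝ) → (Fin p → ℝ))
    (h h' : (Fin n → ℝ) → (Fin n → ℝ))
    (H H' : (Fin p → ℝ) → (Fin p → ℝ))
    (hf : Differentiable ℝ f) (hh : Differentiable ℝ h)
    (hh' : Differentiable ℝ h') (hH : Differentiable ℝ H)
    (hH' : Differentiable ℝ H')
    (hhinv : Function.LeftInverse h' h) (hhinv' : Function.RightInverse h' h)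
    (hHinv : Function.LeftInverse H' H) (hHinv' : Function.RightInverse H' H)
    (hg : g = H ∘ f ∘ h)
    (η : (Fin p → ℝ) → (Fin p → ℝ)) (ξ : (Fin n → ℝ) → (Fin n → ℝ))
    (hlift : ∀ x, η (f x) = fderiv ℝ f x (ξ x)) :
    ∀ x, fderiv ℝ H (H' (g x)) (η (H' (g x)))
      = fderiv ℝ g x (fderiv ℝ h' (h x) (ξ (h x))) := by
  intro x
  have hkey : H' (g x) = f (h x) := by rw [hg]; exact hHinv _
  -- chain rule for g
  have hgder : fderiv ℝ g x =
      (fderiv ℝ H (f (h x))).comp ((fderiv ℝ f (h x)).comp (fderiv ℝ h x)) := by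
    rw [hg]
    rw [show H ∘ f ∘ h = (H ∘ f) ∘ h from rfl,
      fderiv_comp x ((hH (f (h x))).comp (h x) (hf (h x))) (hh x),
      fderiv_comp (h x) (hH (f (h x))) (hf (h x))]
    rfl
  -- h ∘ h' = id, so derivatives compose to id at h x
  have hid : (fderiv ℝ h x).comp (fderiv ℝ h' (h x)) = ContinuousLinearMap.id ℝ _ := by
    have : fderiv ℝ (h ∘ h') (h x) = ContinuousLinearMap.id ℝ _ := by
      have : h ∘ h' = id := funext hhinv'
      rw [this, fderiv_id]
    rw [fderiv_comp (h x) (by rw [hhinv x]; exact hh x) (hh' _)] at this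
    rw [hhinv x] at this
    exact this
  rw [hkey, hgder]
  simp only [ContinuousLinearMap.comp_apply]
  have : (fderiv ℝ h x) ((fderiv ℝ h' (h x)) (ξ (h x))) = ξ (h x) := by
    have := congrArg (fun L => L (ξ (h x))) hid
    simpa using this
  rw [this, ← hlift (h x)]
end
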